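/- arXiv:1804.04883 — 3 statements merged into one kernel-verified Lean document; each statement's English description precedes it below -/
import Mathlib

section
/- For α > 0, β ∈ ℝ, and k ∈ ℕ, the k-th derivative of the Mittag-Leffler function equals k! times the Prabhakar function: d^k/dz^k E_{α,β}(z) = k! · E^{k+1}_{α, αk+β}(z) for all z ∈ ℂ. -/
open Complex Filter

/-- The Mittag-Leffler function `E_{α,β}(z) = ∑_{j=0}^∞ z^j / Γ(αj+β)`. -/
noncomputable def mittagLeffler (α β : ℝ) (z : ℂ) : ℂ :=
  ∑' j : ℕ, z ^ j / Complex.Gamma ((α * j + β : ℝ) : ℂ)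

/-- The three-parameter Mittag-Leffler (Prabhakar) function
`E^γ_{α,β}(z) = (1/Γ(γ)) ∑_{j=0}^∞ Γ(j+γ) z^j / (j! Γ(αj+β))`. -/
noncomputable def prabhakar (α β γ : ℝ) (z : ℂ) : ℂ :=
  (1 / Complex.Gamma ((γ : ℝ) : ℂ)) *
    ∑' j : ℕ, Complex.Gamma ((j + γ : ℝ) : ℂ) * z ^ j /
      ((Nat.factorial j : ℂ) * Complex.Gamma ((α * j + β : ℝ) : ℂ))

/-- The coefficient condition for an entire power series. -/
def EntireCoeff (a : ℕ → ℂ) : Prop := ∀ r : ℝ, 0 ≤ r → Summable (fun n => ‖a n‖ * r ^ n)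

lemma EntireCoeff.summable {a : ℕ → ℂ} (h : EntireCoeff a) (z : ℂ) :
    Summable (fun n => a n * z ^ n) := by
  apply Summable.of_norm
  refine ((h ‖z‖ (norm_nonneg z)).congr fun n => ?_)
  simp [norm_mul, norm_pow]

set_option maxHeartbeats 1000000 in
lemma EntireCoeff.shift {a : ℕ → ℂ} (h : EntireCoeff a) :
    EntireCoeff (fun n : ℕ => ((n : ℂ) + 1) * a (n + 1)) := by
  intro r hr
  set s : ℝ := 2 * (r + 1) with hs
  have hsum : Summable (fun n => ‖a (n + 1)‖ * s ^ (n + 1)) :=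
    (summable_nat_add_iff 1).2 (h s (by positivity))
  refine hsum.of_nonneg_of_le (fun n => by positivity) (fun n => ?_)
  have h1 : ((n : ℝ) + 1) * r ^ n ≤ s ^ (n + 1) := by
    have hn : ((n : ℝ) + 1) ≤ 2 ^ (n + 1) := by
      exact_mod_cast (Nat.lt_two_pow_self (n := n + 1)).le
    have hrp : r ^ n ≤ (r + 1) ^ (n + 1) :=
      (pow_le_pow_left₀ hr (by linarith) n).trans
        (pow_le_pow_right₀ (by linarith) (Nat.le_succ n))
    calc ((n : ℝ) + 1) * r ^ n ≤ 2 ^ (n + 1) * (r + 1) ^ (n + 1) :=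
          mul_le_mul hn hrp (by positivity) (by positivity)
      _ = s ^ (n + 1) := by rw [hs, mul_pow]
  show ‖((n : ℂ) + 1) * a (n + 1)‖ * r ^ n ≤ ‖a (n + 1)‖ * s ^ (n + 1)
  calc ‖((n : ℂ) + 1) * a (n + 1)‖ * r ^ n
      = ‖a (n + 1)‖ * (((n : ℝ) + 1) * r ^ n) := by
        rw [norm_mul]
        have h2 : ‖((n : ℂ) + 1)‖ = (n : ℝ) + 1 := by
          simpa using Complex.norm_natCast (n + 1)
        rw [h2]; ring
    _ ≤ ‖a (n + 1)‖ * s ^ (n + 1) :=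
        mul_le_mul_of_nonneg_left h1 (norm_nonneg _)

lemma EntireCoeff.hasDerivAt {a : ℕ → ℂ} (h : EntireCoeff a) (z : ℂ) :
    HasDerivAt (fun w => ∑' n : ℕ, a n * w ^ n)
      (∑' n : ℕ, ((n : ℂ) + 1) * a (n + 1) * z ^ n) z := by
  set R : ℝ := ‖z‖ + 1 with hR
  have hR1 : 1 ≤ R := by rw [hR]; linarith [norm_nonneg z]
  have hu : Summable (fun n => ‖a n‖ * (2 * R) ^ n) := h (2 * R) (by positivity)
  have hbound : ∀ (n : ℕ) (y : ℂ), y ∈ Metric.ball (0 : ℂ) R →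
      ‖a n * ((n : ℂ) * y ^ (n - 1))‖ ≤ ‖a n‖ * (2 * R) ^ n := by
    intro n y hy
    have hyR : ‖y‖ ≤ R := le_of_lt (mem_ball_zero_iff.mp hy)
    have he : ‖a n * ((n : ℂ) * y ^ (n - 1))‖ = ‖a n‖ * ((n : ℝ) * ‖y‖ ^ (n - 1)) := by
      simp [norm_mul, norm_pow]
    rw [he, mul_pow]
    refine mul_le_mul_of_nonneg_left ?_ (norm_nonneg _)
    have h1 : (n : ℝ) ≤ 2 ^ n := by exact_mod_cast (Nat.lt_two_pow_self (n := n)).le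
    have h2 : ‖y‖ ^ (n - 1) ≤ R ^ n :=
      (pow_le_pow_left₀ (norm_nonneg y) hyR _).trans
        (pow_le_pow_right₀ hR1 (Nat.sub_le n 1))
    exact mul_le_mul h1 h2 (by positivity) (by positivity)
  have key : HasDerivAt (fun w => ∑' n : ℕ, a n * w ^ n)
      (∑' n : ℕ, a n * ((n : ℂ) * z ^ (n - 1))) z := by
    refine hasDerivAt_tsum_of_isPreconnected hu Metric.isOpen_ball
      (convex_ball (0:ℂ) R).isPreconnected
      (fun n y _ => (hasDerivAt_pow n y).const_mul (a n)) hbound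
      (Metric.mem_ball_self (by linarith)) (h.summable 0)
      (mem_ball_zero_iff.mpr (by linarith))
  have hsum : Summable (fun n => a n * ((n : ℂ) * z ^ (n - 1))) := by
    refine Summable.of_norm (hu.of_nonneg_of_le (fun n => norm_nonneg _) ?_)
    intro n
    exact hbound n z (mem_ball_zero_iff.mpr (by linarith))
  have heq : (∑' n : ℕ, a n * ((n : ℂ) * z ^ (n - 1)))
      = ∑' n : ℕ, ((n : ℂ) + 1) * a (n + 1) * z ^ n := by
    rw [hsum.tsum_eq_zero_add]
    simp only [Nat.cast_zero, zero_mul, mul_zero, zero_add]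
    refine tsum_congr fun n => ?_
    push_cast
    ring
  exact heq ▸ key

lemma iteratedDeriv_tsum_coeff (k : ℕ) : ∀ (a : ℕ → ℂ), EntireCoeff a → ∀ (z : ℂ),
    iteratedDeriv k (fun w => ∑' n : ℕ, a n * w ^ n) z
      = ∑' n : ℕ, ((n + k).descFactorial k : ℂ) * a (n + k) * z ^ n := by
  induction k with
  | zero => intro a ha z; simp
  | succ k ih =>
    intro a ha z
    rw [iteratedDeriv_succ']
    have hder : (deriv fun w => ∑' n : ℕ, a n * w ^ n)
        = fun w => ∑' n : ℕ, ((n : ℂ) + 1) * a (n + 1) * w ^ n :=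
      funext fun w => (ha.hasDerivAt w).deriv
    rw [hder, ih _ ha.shift z]
    refine tsum_congr fun n => ?_
    have hd : ((n + (k + 1)).descFactorial (k + 1) : ℂ)
        = (((n + k : ℕ) : ℂ) + 1) * ((n + k).descFactorial k : ℂ) := by
      rw [show n + (k + 1) = (n + k) + 1 by omega, Nat.succ_descFactorial_succ]
      push_cast
      ring
    rw [hd]
    ring_nf

lemma entire_mlCoeff (α β : ℝ) (hα : 0 < α) :
    EntireCoeff (fun n => 1 / Complex.Gamma ((α * n + β : ℝ) : ℂ)) := by
  intro r hr
  obtain ⟨K, hK⟩ : ∃ K : ℕ, r < ((K : ℝ) + 1) ^ α := by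
    obtain ⟨K, hK⟩ := exists_nat_gt ((max r 1) ^ (1 / α))
    refine ⟨K, ?_⟩
    have h1 : (1 : ℝ) ≤ max r 1 := le_max_right r 1
    have h0 : (0 : ℝ) < max r 1 := lt_of_lt_of_le one_pos h1
    calc r ≤ max r 1 := le_max_left _ _
      _ = ((max r 1) ^ (1 / α)) ^ α := by
          rw [← Real.rpow_mul h0.le, one_div_mul_cancel hα.ne', Real.rpow_one]
      _ < ((K : ℝ) + 1) ^ α :=
          Real.rpow_lt_rpow (Real.rpow_nonneg h0.le _) (hK.trans (lt_add_one _)) hα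
  set N : ℕ := ⌈((K : ℝ) + 2 - β) / α⌉₊ with hNdef
  have hNle : (K : ℝ) + 2 ≤ α * N + β := by
    have h1 : ((K : ℝ) + 2 - β) / α ≤ N := Nat.le_ceil _
    rw [div_le_iff₀ hα] at h1
    nlinarith
  rw [← summable_nat_add_iff N]
  have hgeo : Summable (fun n : ℕ =>
      (r ^ N * ((K : ℝ) + 1) / (K + 1).factorial) * (r / ((K : ℝ) + 1) ^ α) ^ n) := by
    apply Summable.mul_left
    apply summable_geometric_of_lt_one (by positivity)
    rw [div_lt_one (by positivity)]
    exact hK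
  refine hgeo.of_nonneg_of_le (fun n => by positivity) (fun n => ?_)
  -- pointwise bound
  set x : ℝ := α * ((n + N : ℕ) : ℝ) + β with hxdef
  have hxge : α * n + ((K : ℝ) + 2) ≤ x := by
    rw [hxdef]
    push_cast
    nlinarith [mul_nonneg hα.le (show (0:ℝ) ≤ (n:ℝ) from Nat.cast_nonneg n)]
  have hαn : (0 : ℝ) ≤ α * n := mul_nonneg hα.le (Nat.cast_nonneg n)
  set F : ℕ := ⌊α * (n : ℝ)⌋₊ with hFdef
  have hF1 : (F : ℝ) ≤ α * n := Nat.floor_le hαn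
  have hF2 : α * (n : ℝ) < F + 1 := Nat.lt_floor_add_one _
  set m : ℕ := K + 1 + F with hmdef
  have hmcast : (m : ℝ) = (K : ℝ) + 1 + F := by rw [hmdef]; push_cast; ring
  have hm1 : (m : ℝ) + 1 ≤ x := by rw [hmcast]; linarith
  have hm2 : (2 : ℝ) ≤ (m : ℝ) + 1 := by
    rw [hmcast]
    have h1 : (0:ℝ) ≤ (K:ℝ) := Nat.cast_nonneg K
    have h2 : (0:ℝ) ≤ (F:ℝ) := Nat.cast_nonneg F
    linarith
  have hx2 : (2 : ℝ) ≤ x := le_trans hm2 hm1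
  have hmono : Real.Gamma ((m : ℝ) + 1) ≤ Real.Gamma x :=
    Real.Gamma_strictMonoOn_Ici.monotoneOn hm2 (le_trans hm2 hm1) hm1
  have hfac : Real.Gamma ((m : ℝ) + 1) = (m.factorial : ℝ) := Real.Gamma_nat_eq_factorial m
  have hfac2 : ((K + 1).factorial : ℝ) * ((K : ℝ) + 2) ^ F ≤ (m.factorial : ℝ) := by
    have := Nat.factorial_mul_pow_le_factorial (m := K + 1) (n := F)
    rw [hmdef]
    exact_mod_cast this
  have hpow : ((K : ℝ) + 1) ^ (α * (n : ℝ)) ≤ ((K : ℝ) + 2) ^ F * ((K : ℝ) + 1) := by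
    have hb : (1 : ℝ) ≤ (K : ℝ) + 1 := by linarith [show (0:ℝ) ≤ (K:ℝ) from Nat.cast_nonneg K]
    calc ((K : ℝ) + 1) ^ (α * (n : ℝ))
        ≤ ((K : ℝ) + 1) ^ ((F : ℝ) + 1) :=
          Real.rpow_le_rpow_of_exponent_le hb hF2.le
      _ = ((K : ℝ) + 1) ^ F * ((K : ℝ) + 1) := by
          rw [Real.rpow_add (by positivity), Real.rpow_one, Real.rpow_natCast]
      _ ≤ ((K : ℝ) + 2) ^ F * ((K : ℝ) + 1) := by
          gcongr
          linarith
  have hΓge : ((K + 1).factorial : ℝ) * ((K : ℝ) + 1) ^ (α * (n : ℝ))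
      ≤ Real.Gamma x * ((K : ℝ) + 1) := by
    calc ((K + 1).factorial : ℝ) * ((K : ℝ) + 1) ^ (α * (n : ℝ))
        ≤ ((K + 1).factorial : ℝ) * (((K : ℝ) + 2) ^ F * ((K : ℝ) + 1)) := by
          exact mul_le_mul_of_nonneg_left hpow (by positivity)
      _ = (((K + 1).factorial : ℝ) * ((K : ℝ) + 2) ^ F) * ((K : ℝ) + 1) := by ring
      _ ≤ (m.factorial : ℝ) * ((K : ℝ) + 1) := by
          exact mul_le_mul_of_nonneg_right hfac2 (by positivity)
      _ ≤ Real.Gamma x * ((K : ℝ) + 1) := by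
          refine mul_le_mul_of_nonneg_right ?_ (by positivity)
          rw [← hfac]; exact hmono
  have hΓpos : 0 < Real.Gamma x := Real.Gamma_pos_of_pos (by linarith)
  have hnorm : ‖1 / Complex.Gamma ((x : ℝ) : ℂ)‖ = 1 / Real.Gamma x := by
    rw [Complex.Gamma_ofReal, norm_div, norm_one, Complex.norm_real,
      Real.norm_eq_abs, abs_of_pos hΓpos]
  have hrpow : (((K : ℝ) + 1) ^ α) ^ n = ((K : ℝ) + 1) ^ (α * (n : ℝ)) := by
    rw [Real.rpow_mul (by positivity), Real.rpow_natCast]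
  show ‖1 / Complex.Gamma ((x : ℝ) : ℂ)‖ * r ^ (n + N)
      ≤ (r ^ N * ((K : ℝ) + 1) / (K + 1).factorial) * (r / ((K : ℝ) + 1) ^ α) ^ n
  rw [hnorm, div_pow, hrpow, one_div_mul_eq_div, div_mul_div_comm,
    div_le_div_iff₀ hΓpos (by positivity)]
  calc r ^ (n + N) * (((K + 1).factorial : ℝ) * ((K : ℝ) + 1) ^ (α * (n : ℝ)))
      ≤ r ^ (n + N) * (Real.Gamma x * ((K : ℝ) + 1)) :=
        mul_le_mul_of_nonneg_left hΓge (by positivity)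
    _ = r ^ N * ((K : ℝ) + 1) * r ^ n * Real.Gamma x := by
        rw [pow_add]; ring

/-- The k-th derivative of the Mittag-Leffler function equals `k!` times the
Prabhakar function: `d^k/dz^k E_{α,β}(z) = k! E^{k+1}_{α,αk+β}(z)`. -/
theorem iteratedDeriv_mittagLeffler_eq_prabhakar (α β : ℝ) (hα : 0 < α) (k : ℕ) (z : ℂ) :
    iteratedDeriv k (mittagLeffler α β) z =
      (Nat.factorial k : ℂ) * prabhakar α (α * k + β) (k + 1) z := by
  have hml : mittagLeffler α β
      = fun w => ∑' n : ℕ, (1 / Complex.Gamma ((α * n + β : ℝ) : ℂ)) * w ^ n := by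
    funext w
    simp only [mittagLeffler, div_eq_mul_inv, one_div, one_mul]
    exact tsum_congr fun j => mul_comm _ _
  rw [hml, iteratedDeriv_tsum_coeff k _ (entire_mlCoeff α β hα) z]
  unfold prabhakar
  have hΓγ : Complex.Gamma (((k : ℝ) + 1 : ℝ) : ℂ) = (k.factorial : ℂ) := by
    rw [show ((((k : ℝ) + 1 : ℝ)) : ℂ) = ((k : ℂ) + 1) by push_cast; ring]
    exact Complex.Gamma_nat_eq_factorial k
  rw [hΓγ, ← mul_assoc, mul_one_div, div_self (by exact_mod_cast k.factorial_ne_zero), one_mul]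
  refine tsum_congr fun j => ?_
  have hΓj : Complex.Gamma (((j : ℝ) + ((k : ℝ) + 1) : ℝ) : ℂ) = ((j + k).factorial : ℂ) := by
    rw [show ((((j : ℝ) + ((k : ℝ) + 1) : ℝ)) : ℂ) = (((j + k : ℕ) : ℂ) + 1) by push_cast; ring]
    exact Complex.Gamma_nat_eq_factorial (j + k)
  have harg : ((α * (j : ℝ) + (α * k + β) : ℝ) : ℂ) = ((α * ((j + k : ℕ) : ℝ) + β : ℝ) : ℂ) := by
    norm_cast
    push_cast
    ring
  rw [hΓj, harg]
  have hdesc : (((j + k).descFactorial k : ℕ) : ℂ) * (j.factorial : ℂ) = ((j + k).factorial : ℂ) := by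
    have := Nat.factorial_mul_descFactorial (n := j + k) (k := k) (Nat.le_add_left k j)
    rw [Nat.add_sub_cancel] at this
    have h2 : (j + k).descFactorial k * j.factorial = (j + k).factorial := by
      rw [mul_comm]; exact this
    exact_mod_cast h2
  set G : ℂ := Complex.Gamma ((α * ((j + k : ℕ) : ℝ) + β : ℝ) : ℂ) with hG
  rcases eq_or_ne G 0 with h0 | h0
  · rw [h0]
    simp
  · have hj : (j.factorial : ℂ) ≠ 0 := by exact_mod_cast j.factorial_ne_zero
    rw [← hdesc, eq_div_iff (mul_ne_zero hj h0), one_div]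
    calc ((j + k).descFactorial k : ℂ) * G⁻¹ * z ^ j * ((j.factorial : ℂ) * G)
        = ((j + k).descFactorial k : ℂ) * (j.factorial : ℂ) * z ^ j * (G⁻¹ * G) := by ring
      _ = ((j + k).descFactorial k : ℂ) * (j.factorial : ℂ) * z ^ j := by
          rw [inv_mul_cancel₀ h0, mul_one]
end

section
/- (Summation formula of Djrbashian type) Let α > 0, β ∈ ℝ, and z ≠ 0. For every k ∈ ℕ, d^k/dz^k E_{α,β}(z) = (1/(α^k z^k)) Σ_{j=0}^k c_j^{(k)} E_{α, β-j}(z), where the coefficients c_j^{(k)} are defined recursively by c_0^{(0)} = 1, c_0^{(k)} = (1 - β - α(k-1)) c_0^{(k-1)}, c_j^{(k)} = c_{j-1}^{(k-1)} + (1 - β - α(k-1) + j) c_j^{(k-1)} for 1 ≤ j ≤ k-1, and c_k^{(k)} = 1. -/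
/-- The Djrbashian coefficients `c_j^{(k)}`, defined recursively by `c_0^{(0)} = 1`,
`c_0^{(k)} = (1-β-α(k-1)) c_0^{(k-1)}`,
`c_j^{(k)} = c_{j-1}^{(k-1)} + (1-β-α(k-1)+j) c_j^{(k-1)}` for `1 ≤ j ≤ k-1`,
and `c_k^{(k)} = 1`. -/
noncomputable def djcoef (α β : ℝ) : ℕ → ℕ → ℝ
  | 0, j => if j = 0 then 1 else 0
  | (k + 1), j =>
    if j = 0 then (1 - β - α * k) * djcoef α β k 0
    else if j = k + 1 then 1
    else djcoef α β k (j - 1) + (1 - β - α * k + j) * djcoef α β k j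

open Filter Finset

lemma gamma_lower (α β : ℝ) (hα : 0 < α) (R : ℝ) (hR : 1 ≤ R) :
    ∀ᶠ n : ℕ in atTop, R ^ n ≤ Real.Gamma (α * n + β) := by
  set s : ℕ := ⌈2 / α⌉₊ + 1 with hs
  have hs0 : 0 < s := Nat.succ_pos _
  have hsα : 2 / α ≤ (s : ℝ) := le_trans (Nat.le_ceil _) (by exact_mod_cast Nat.le_succ _)
  -- eventually (R^s)^k ≤ k!
  have h1 : ∀ᶠ k : ℕ in atTop, (R ^ s) ^ k ≤ (Nat.factorial k : ℝ) := by
    have := (Real.summable_pow_div_factorial (R ^ s)).tendsto_atTop_zero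
    have h2 := this.eventually (eventually_le_nhds (show (0:ℝ) < 1 by norm_num))
    filter_upwards [h2] with k hk
    have hfac : (0:ℝ) < (Nat.factorial k : ℝ) := by exact_mod_cast Nat.factorial_pos k
    rw [div_le_iff₀ hfac, one_mul] at hk
    exact hk
  obtain ⟨K, hK⟩ := eventually_atTop.1 h1
  have htend : Tendsto (fun n : ℕ => (α / 2) * n) atTop atTop :=
    Tendsto.const_mul_atTop (by positivity) tendsto_natCast_atTop_atTop
  have h3 : ∀ᶠ n : ℕ in atTop, (2 : ℝ) - β ≤ (α / 2) * n := htend.eventually_ge_atTop _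
  filter_upwards [h3, eventually_ge_atTop (s * K)] with n hn hnK
  set m : ℕ := n / s + 1 with hm
  have hms : (m : ℝ) ≤ (α / 2) * n + 1 := by
    have h4 : ((n / s : ℕ) : ℝ) ≤ (n : ℝ) / s := Nat.cast_div_le
    have h5 : (n : ℝ) / s ≤ (α / 2) * n := by
      rw [div_le_iff₀ (by positivity)]
      have : (2 / α) * ((α/2) * n) ≤ (s:ℝ) * ((α/2)*n) := by
        apply mul_le_mul_of_nonneg_right hsα (by positivity)
      calc (n:ℝ) = (2/α) * ((α/2)*n) := by field_simp
        _ ≤ (s:ℝ) * ((α/2)*n) := this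
        _ = (α/2)*n*s := by ring
    push_cast [hm]
    linarith
  have hm2 : (m : ℝ) + 1 ≤ α * n + β := by linarith
  have hKm : K ≤ m := by
    have h7 : K ≤ n / s := (Nat.le_div_iff_mul_le hs0).2 (by rw [Nat.mul_comm] at hnK; exact hnK)
    calc K ≤ n / s := h7
      _ ≤ m := Nat.le_succ _
  have hnsm : n ≤ s * m := le_of_lt (Nat.lt_mul_div_succ n hs0)
  have hmono := Real.Gamma_strictMonoOn_Ici.monotoneOn
  have hgam : Real.Gamma ((m:ℝ) + 1) ≤ Real.Gamma (α * n + β) := by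
    apply hmono
    · simp only [Set.mem_Ici]
      have : (1:ℝ) ≤ m := by exact_mod_cast Nat.one_le_iff_ne_zero.2 (Nat.succ_ne_zero _)
      linarith
    · simp only [Set.mem_Ici]
      have : (1:ℝ) ≤ m := by exact_mod_cast Nat.one_le_iff_ne_zero.2 (Nat.succ_ne_zero _)
      linarith
    · exact hm2
  have hgamfac : Real.Gamma ((m:ℝ) + 1) = (Nat.factorial m : ℝ) := Real.Gamma_nat_eq_factorial m
  have hfin : R ^ n ≤ (Nat.factorial m : ℝ) := by
    calc R ^ n ≤ R ^ (s * m) := pow_le_pow_right₀ hR hnsm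
      _ = (R ^ s) ^ m := by rw [pow_mul]
      _ ≤ (Nat.factorial m : ℝ) := hK m hKm
  calc R ^ n ≤ (Nat.factorial m : ℝ) := hfin
    _ = Real.Gamma ((m:ℝ)+1) := hgamfac.symm
    _ ≤ _ := hgam

lemma ml_norm_summable (α β : ℝ) (hα : 0 < α) (r : ℝ) (hr : 0 ≤ r) :
    Summable (fun n : ℕ => ((n : ℝ) + 1) * r ^ n * ‖(Complex.Gamma ((α * n + β : ℝ) : ℂ))⁻¹‖) := by
  obtain ⟨R, hRdef⟩ : ∃ R : ℝ, R = 4 * (r + 1) := ⟨_, rfl⟩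
  have hR : 1 ≤ R := by simp only [hRdef]; nlinarith
  have hev := gamma_lower α β hα R hR
  apply Summable.of_norm_bounded_eventually_nat
    (summable_geometric_of_lt_one (by norm_num : (0:ℝ) ≤ 1/2) (by norm_num))
  filter_upwards [hev] with n hn
  have hΓpos : (0:ℝ) < Real.Gamma (α * n + β) := lt_of_lt_of_le (by positivity) hn
  have hnorm : ‖(Complex.Gamma ((α * n + β : ℝ) : ℂ))⁻¹‖ = (Real.Gamma (α * n + β))⁻¹ := by
    rw [Complex.Gamma_ofReal, norm_inv, Complex.norm_real, Real.norm_eq_abs,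
      abs_of_pos hΓpos]
  have h1 : ((n:ℝ)+1) * r ^ n * ‖(Complex.Gamma ((α * n + β : ℝ) : ℂ))⁻¹‖
      ≤ ((n:ℝ)+1) * r ^ n * (R ^ n)⁻¹ := by
    rw [hnorm]
    apply mul_le_mul_of_nonneg_left _ (by positivity)
    exact inv_anti₀ (by positivity) hn
  have h2 : ((n:ℝ)+1) ≤ 2 ^ n := by
    exact_mod_cast Nat.succ_le_of_lt (Nat.lt_two_pow_self (n := n))
  have hRpos : (0:ℝ) < R := by linarith
  have h3 : ((n:ℝ)+1) * r ^ n * (R ^ n)⁻¹ ≤ (1/2 : ℝ) ^ n := by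
    calc ((n:ℝ)+1) * r ^ n * (R ^ n)⁻¹ ≤ 2 ^ n * r ^ n * (R ^ n)⁻¹ :=
          mul_le_mul_of_nonneg_right (mul_le_mul_of_nonneg_right h2 (pow_nonneg hr n))
            (by positivity)
      _ = ((2*r)/R) ^ n := by rw [div_pow, mul_pow, div_eq_mul_inv]
      _ ≤ (1/2 : ℝ) ^ n := by
          apply pow_le_pow_left₀ (by positivity)
          rw [div_le_div_iff₀ hRpos (by norm_num)]
          simp only [hRdef]; nlinarith
  rw [Real.norm_eq_abs, abs_of_nonneg (by positivity)]
  exact le_trans h1 h3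


lemma ml_summable (α β : ℝ) (hα : 0 < α) (z : ℂ) :
    Summable (fun n : ℕ => z ^ n / Complex.Gamma ((α * n + β : ℝ) : ℂ)) := by
  apply Summable.of_norm
  apply Summable.of_nonneg_of_le (fun n => norm_nonneg _) _
    (ml_norm_summable α β hα ‖z‖ (norm_nonneg z))
  intro n
  rw [norm_div, div_eq_mul_inv, ← norm_inv, norm_pow]
  nlinarith [mul_nonneg (pow_nonneg (norm_nonneg z) n)
    (norm_nonneg (Complex.Gamma ((α * n + β : ℝ) : ℂ))⁻¹),
    norm_nonneg z, pow_nonneg (norm_nonneg z) n,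
    norm_nonneg (Complex.Gamma ((α * n + β : ℝ) : ℂ))⁻¹]

lemma inv_Gamma_sub_one (x : ℂ) :
    (Complex.Gamma (x - 1))⁻¹ = (x - 1) * (Complex.Gamma x)⁻¹ := by
  rcases eq_or_ne x 1 with h | h
  · simp [h, Complex.Gamma_zero]
  · have hx1 : x - 1 ≠ 0 := sub_ne_zero.mpr h
    have hG : Complex.Gamma x = (x - 1) * Complex.Gamma (x - 1) := by
      have h2 := Complex.Gamma_add_one (x - 1) hx1
      rw [sub_add_cancel] at h2
      rw [h2]
    rw [hG, mul_inv]
    rcases eq_or_ne (Complex.Gamma (x - 1)) 0 with h0 | h0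
    · simp [h0]
    · field_simp

lemma ml_hasDerivAt (α β : ℝ) (hα : 0 < α) (z : ℂ) (hz : z ≠ 0) :
    HasDerivAt (mittagLeffler α β)
      (((α : ℂ) * z)⁻¹ *
        (mittagLeffler α (β - 1) z - ((β : ℂ) - 1) * mittagLeffler α β z)) z := by
  have haz : (α : ℂ) * z ≠ 0 :=
    mul_ne_zero (by exact_mod_cast ne_of_gt hα) hz
  -- step 1: derivative as a tsum
  have key : HasDerivAt (mittagLeffler α β)
      (∑' n : ℕ, (n : ℂ) * z ^ (n - 1) / Complex.Gamma ((α * n + β : ℝ) : ℂ)) z := by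
    have hfun : mittagLeffler α β =
        fun w : ℂ => ∑' n : ℕ, w ^ n / Complex.Gamma ((α * n + β : ℝ) : ℂ) := rfl
    rw [hfun]
    apply hasDerivAt_tsum_of_isPreconnected
      (u := fun n : ℕ => ((n : ℝ) + 1) * (‖z‖ + 1) ^ n *
        ‖(Complex.Gamma ((α * n + β : ℝ) : ℂ))⁻¹‖)
      (y₀ := z)
      (ml_norm_summable α β hα (‖z‖ + 1) (by positivity))
      (Metric.isOpen_ball) (convex_ball (0 : ℂ) (‖z‖ + 1)).isPreconnected
      (g' := fun n w => (n : ℂ) * w ^ (n - 1) / Complex.Gamma ((α * n + β : ℝ) : ℂ))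
    · intro n y _
      exact (hasDerivAt_pow n y).div_const _
    · intro n y hy
      rw [Metric.mem_ball, dist_zero_right] at hy
      rw [norm_div, div_eq_mul_inv, ← norm_inv, norm_mul, norm_pow, Complex.norm_natCast]
      have h1 : ‖y‖ ^ (n - 1) ≤ (‖z‖ + 1) ^ n := by
        calc ‖y‖ ^ (n - 1) ≤ (‖z‖ + 1) ^ (n - 1) :=
              pow_le_pow_left₀ (norm_nonneg y) (le_of_lt hy) _
          _ ≤ (‖z‖ + 1) ^ n :=
              pow_le_pow_right₀ (by linarith [norm_nonneg z]) (Nat.sub_le n 1)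
      have h2 : (n : ℝ) ≤ (n : ℝ) + 1 := by linarith
      have hnn : (0:ℝ) ≤ ‖(Complex.Gamma ((α * n + β : ℝ) : ℂ))⁻¹‖ := norm_nonneg _
      exact mul_le_mul_of_nonneg_right
        (mul_le_mul h2 h1 (by positivity) (by positivity)) hnn
    · rw [Metric.mem_ball, dist_zero_right]; linarith [norm_nonneg z]
    · exact ml_summable α β hα z
    · rw [Metric.mem_ball, dist_zero_right]; linarith [norm_nonneg z]
  -- step 2: identify the value
  have hval : (∑' n : ℕ, (n : ℂ) * z ^ (n - 1) / Complex.Gamma ((α * n + β : ℝ) : ℂ)) =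
      ((α : ℂ) * z)⁻¹ *
        (mittagLeffler α (β - 1) z - ((β : ℂ) - 1) * mittagLeffler α β z) := by
    rw [eq_inv_mul_iff_mul_eq₀ haz, ← tsum_mul_left]
    have hcong : ∀ n : ℕ,
        (α : ℂ) * z * ((n : ℂ) * z ^ (n - 1) / Complex.Gamma ((α * n + β : ℝ) : ℂ)) =
        z ^ n / Complex.Gamma ((α * n + (β - 1) : ℝ) : ℂ) -
          ((β : ℂ) - 1) * (z ^ n / Complex.Gamma ((α * n + β : ℝ) : ℂ)) := by
      intro n
      have hzn : ((n : ℂ)) * z ^ (n - 1) * z = (n : ℂ) * z ^ n := by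
        cases n with
        | zero => simp
        | succ m => rw [Nat.succ_sub_one, pow_succ]; ring
      have hx : ((α * n + (β - 1) : ℝ) : ℂ) = ((α * n + β : ℝ) : ℂ) - 1 := by
        push_cast; ring
      rw [hx, div_eq_mul_inv, div_eq_mul_inv, div_eq_mul_inv, inv_Gamma_sub_one]
      have : (α : ℂ) * z * ((n : ℂ) * z ^ (n - 1) *
          (Complex.Gamma ((α * n + β : ℝ) : ℂ))⁻¹) =
          (α : ℂ) * ((n : ℂ) * z ^ (n - 1) * z) *
            (Complex.Gamma ((α * n + β : ℝ) : ℂ))⁻¹ := by ring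
      rw [this, hzn]
      push_cast
      ring
    rw [tsum_congr hcong, Summable.tsum_sub (ml_summable α (β - 1) hα z)
      ((ml_summable α β hα z).mul_left _), tsum_mul_left]
    rfl
  rw [← hval]
  exact key

lemma djcoef_self (α β : ℝ) (k : ℕ) : djcoef α β k k = 1 := by
  cases k with
  | zero => simp [djcoef]
  | succ m => simp [djcoef]

lemma djcoef_zero_of_lt (α β : ℝ) : ∀ k j : ℕ, k < j → djcoef α β k j = 0 := by
  intro k
  induction k with
  | zero => intro j hj; rw [djcoef, if_neg (by omega)]
  | succ m ih =>
    intro j hj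
    have hj0 : j ≠ 0 := by omega
    have hj1 : j ≠ m + 1 := by omega
    rw [djcoef, if_neg hj0, if_neg hj1, ih (j-1) (by omega), ih j (by omega)]
    ring

lemma sum_step (α β : ℝ) (k : ℕ) (T : ℕ → ℂ) :
    ∑ j ∈ Finset.range (k + 2), (djcoef α β (k + 1) j : ℂ) * T j
      = ∑ j ∈ Finset.range (k + 1), (djcoef α β k j : ℂ) *
          (T (j + 1) + ((1 : ℂ) - β - α * k + j) * T j) := by
  have split : ∀ j ∈ Finset.range (k + 2),
      (djcoef α β (k + 1) j : ℂ) * T j =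
        (if j = 0 then 0 else (djcoef α β k (j - 1) : ℂ) * T j) +
        (if j = k + 1 then 0 else ((1 : ℂ) - β - α * k + j) * (djcoef α β k j : ℂ) * T j) := by
    intro j hj
    rcases eq_or_ne j 0 with h0 | h0
    · subst h0
      rcases eq_or_ne (k + 1) 0 with h | h
      · omega
      · rw [if_pos rfl, if_neg (by omega)]
        show ((djcoef α β (k + 1) 0 : ℝ) : ℂ) * T 0 = _
        rw [djcoef, if_pos rfl]
        push_cast
        ring
    · rcases eq_or_ne j (k + 1) with h1 | h1
      · subst h1
        rw [if_neg h0, if_pos rfl]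
        show ((djcoef α β (k + 1) (k + 1) : ℝ) : ℂ) * T (k + 1) = _
        rw [djcoef, if_neg h0, if_pos rfl, Nat.add_sub_cancel, djcoef_self]
        push_cast
        ring
      · rw [if_neg h0, if_neg h1]
        show ((djcoef α β (k + 1) j : ℝ) : ℂ) * T j = _
        rw [djcoef, if_neg h0, if_neg h1]
        push_cast
        ring
  rw [Finset.sum_congr rfl split, Finset.sum_add_distrib]
  have e1 : ∑ j ∈ Finset.range (k + 2),
      (if j = 0 then 0 else (djcoef α β k (j - 1) : ℂ) * T j)
      = ∑ j ∈ Finset.range (k + 1), (djcoef α β k j : ℂ) * T (j + 1) := by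
    rw [Finset.sum_range_succ']
    simp
  have e2 : ∑ j ∈ Finset.range (k + 2),
      (if j = k + 1 then 0 else ((1 : ℂ) - β - α * k + j) * (djcoef α β k j : ℂ) * T j)
      = ∑ j ∈ Finset.range (k + 1), ((1 : ℂ) - β - α * k + j) * (djcoef α β k j : ℂ) * T j := by
    rw [Finset.sum_range_succ, if_pos rfl, add_zero]
    apply Finset.sum_congr rfl
    intro j hj
    rw [if_neg (by simp at hj; omega)]
  rw [e1, e2, ← Finset.sum_add_distrib]
  apply Finset.sum_congr rfl
  intro j _
  ring

/-- Summation formula of Djrbashian type: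
`d^k/dz^k E_{α,β}(z) = (1/(α^k z^k)) ∑_{j=0}^k c_j^{(k)} E_{α,β-j}(z)` for `z ≠ 0`. -/
theorem iteratedDeriv_mittagLeffler_djrbashian (α β : ℝ) (hα : 0 < α) (z : ℂ) (hz : z ≠ 0)
    (k : ℕ) :
    iteratedDeriv k (mittagLeffler α β) z =
      (1 / ((α : ℂ) ^ k * z ^ k)) *
        ∑ j ∈ Finset.range (k + 1), (djcoef α β k j : ℂ) * mittagLeffler α (β - j) z := by
  induction k generalizing z with
  | zero => simp [iteratedDeriv_zero, djcoef]
  | succ k ih =>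
    have hα' : (α : ℂ) ≠ 0 := by exact_mod_cast hα.ne'
    rw [iteratedDeriv_succ]
    have hmem : {w : ℂ | w ≠ 0} ∈ nhds z := isOpen_ne.mem_nhds hz
    have hev : iteratedDeriv k (mittagLeffler α β) =ᶠ[nhds z]
        (fun w => (1 / ((α : ℂ) ^ k * w ^ k)) *
          ∑ j ∈ Finset.range (k + 1), (djcoef α β k j : ℂ) * mittagLeffler α (β - j) w) :=
      Filter.eventuallyEq_of_mem hmem (fun w hw => ih w hw)
    rw [hev.deriv_eq]
    have hML : ∀ j : ℕ, HasDerivAt (mittagLeffler α (β - j))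
        (((α : ℂ) * z)⁻¹ * (mittagLeffler α (β - ((j + 1 : ℕ) : ℝ)) z -
          (((β - j : ℝ) : ℂ) - 1) * mittagLeffler α (β - j) z)) z := by
      intro j
      have h := ml_hasDerivAt α (β - j) hα z hz
      have harg : (β - (j : ℝ)) - 1 = β - ((j + 1 : ℕ) : ℝ) := by push_cast; ring
      rw [harg] at h
      exact h
    have hS : HasDerivAt
        (fun w => ∑ j ∈ Finset.range (k + 1),
          (djcoef α β k j : ℂ) * mittagLeffler α (β - j) w)
        (∑ j ∈ Finset.range (k + 1), (djcoef α β k j : ℂ) *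
          (((α : ℂ) * z)⁻¹ * (mittagLeffler α (β - ((j + 1 : ℕ) : ℝ)) z -
            (((β - j : ℝ) : ℂ) - 1) * mittagLeffler α (β - j) z))) z :=
      HasDerivAt.fun_sum fun j _ => (hML j).const_mul _
    have hpow : HasDerivAt (fun w : ℂ => (w ^ k)⁻¹)
        (-((k : ℂ) * z ^ (k - 1)) / (z ^ k) ^ 2) z :=
      (hasDerivAt_pow k z).inv (pow_ne_zero k hz)
    have hfun : (fun w : ℂ => (1 / ((α : ℂ) ^ k * w ^ k)) *
          ∑ j ∈ Finset.range (k + 1),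
            (djcoef α β k j : ℂ) * mittagLeffler α (β - j) w) =
        (fun w : ℂ => ((α : ℂ) ^ k)⁻¹ * ((w ^ k)⁻¹ *
          ∑ j ∈ Finset.range (k + 1),
            (djcoef α β k j : ℂ) * mittagLeffler α (β - j) w)) := by
      funext w
      rw [one_div, mul_inv, mul_assoc]
    rw [hfun, ((hpow.fun_mul hS).const_mul (((α : ℂ) ^ k)⁻¹)).deriv]
    rw [sum_step α β k (fun j : ℕ => mittagLeffler α (β - j) z)]
    set T : ℕ → ℂ := fun j : ℕ => mittagLeffler α (β - j) z with hT
    set S0 : ℂ := ∑ j ∈ Finset.range (k + 1), (djcoef α β k j : ℂ) * T j with hS0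
    set S1 : ℂ := ∑ j ∈ Finset.range (k + 1), (djcoef α β k j : ℂ) *
      (T (j + 1) + ((1 : ℂ) - β - α * k + j) * T j) with hS1
    have hA : ∀ j ∈ Finset.range (k + 1), (djcoef α β k j : ℂ) *
        (((α : ℂ) * z)⁻¹ * (T (j + 1) - (((β - j : ℝ) : ℂ) - 1) * T j)) =
        ((α : ℂ) * z)⁻¹ * ((djcoef α β k j : ℂ) *
          (T (j + 1) + ((1 : ℂ) - β - α * k + j) * T j)) +
        ((α : ℂ) * z)⁻¹ * (((α : ℂ) * k) * ((djcoef α β k j : ℂ) * T j)) := by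
      intro j _
      push_cast
      ring
    have key2 : (∑ j ∈ Finset.range (k + 1), (djcoef α β k j : ℂ) *
        (((α : ℂ) * z)⁻¹ * (T (j + 1) - (((β - j : ℝ) : ℂ) - 1) * T j))) =
        ((α : ℂ) * z)⁻¹ * S1 + ((α : ℂ) * z)⁻¹ * (((α : ℂ) * k) * S0) := by
      rw [Finset.sum_congr rfl hA, Finset.sum_add_distrib, ← Finset.mul_sum, ← Finset.mul_sum,
        ← Finset.mul_sum]
    rw [key2]
    have hk1 : ((k : ℂ)) * z ^ (k - 1) = (k : ℂ) * z ^ k / z := by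
      cases k with
      | zero => simp
      | succ m =>
        rw [Nat.succ_sub_one, pow_succ]
        field_simp
    rw [hk1, pow_succ ((α : ℂ)) k, pow_succ z k]
    set b : ℂ := z ^ k with hbdef
    set a : ℂ := (α : ℂ) ^ k with hadef
    have hb0 : b ≠ 0 := pow_ne_zero k hz
    have ha0 : a ≠ 0 := pow_ne_zero k hα'
    clear_value b a
    field_simp
    ring
end

section
/- Let α > 0, z ∈ ℂ with z ≠ 0, and fix a value s = |z| e^{i Arg(z)} with −π < Arg(z) ≤ π. Then the set of solutions s⋆ in the principal branch (−π < Arg(s⋆) ≤ π) of the equation s⋆^α = z (with s⋆^α = exp(α Log s⋆) the principal power) is exactly S⋆ = { |z|^{1/α} e^{i(Arg(z) + 2jπ)/α} : j ∈ ℤ, −α/2 − Arg(z)/(2π) < j ≤ α/2 − Arg(z)/(2π) }. -/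
open Real

/-- For `α > 0` and `z ≠ 0`, the set of solutions `s⋆` (in the principal branch) of
`s⋆^α = z`, with `s^α := exp(α Log s)` the principal power, is exactly
`{ |z|^{1/α} e^{i(Arg z + 2jπ)/α} : j ∈ ℤ, -α/2 - Arg(z)/(2π) < j ≤ α/2 - Arg(z)/(2π) }`. -/
theorem principal_solutions_cpow_eq (α : ℝ) (hα : 0 < α) (z : ℂ) (hz : z ≠ 0) :
    {s : ℂ | s ^ (α : ℂ) = z} =
      {s : ℂ | ∃ j : ℤ,
        (-(α / 2) - z.arg / (2 * π) < (j : ℝ) ∧ (j : ℝ) ≤ α / 2 - z.arg / (2 * π)) ∧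
        s = ((‖z‖ ^ (1 / α) : ℝ) : ℂ) *
          Complex.exp (Complex.I * ((z.arg + 2 * j * π) / α))} := by
  have hπ := Real.pi_pos
  have hαne : α ≠ 0 := ne_of_gt hα
  have habs : 0 < ‖z‖ := norm_pos_iff.mpr hz
  set A := z.arg with hA
  ext s
  simp only [Set.mem_setOf_eq]
  constructor
  · intro hs
    have hs0 : s ≠ 0 := by
      rintro rfl
      rw [Complex.zero_cpow (by exact_mod_cast hαne)] at hs
      exact hz hs.symm
    rw [Complex.cpow_def_of_ne_zero hs0, ← Complex.exp_log hz,
      Complex.exp_eq_exp_iff_exists_int] at hs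
    obtain ⟨n, hn⟩ := hs
    -- real and imaginary parts
    have hre : Real.log (‖s‖) * α = Real.log (‖z‖) := by
      have := congrArg Complex.re hn
      simpa [Complex.log_re, Complex.mul_re, Complex.mul_im] using this
    have hargs : s.arg = (A + 2 * n * π) / α := by
      have him := congrArg Complex.im hn
      simp [Complex.log_im, Complex.mul_re, Complex.mul_im, Complex.log_re] at him
      field_simp
      linarith [him]
    refine ⟨n, ⟨?_, ?_⟩, ?_⟩
    · have h1 : -π < (A + 2 * n * π) / α := hargs ▸ Complex.neg_pi_lt_arg s
      rw [show -(α / 2) - A / (2 * π) = (-(π * α) - A) / (2 * π) by field_simp,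
        div_lt_iff₀ (by positivity)]
      rw [lt_div_iff₀ hα] at h1
      linarith
    · have h2 : (A + 2 * n * π) / α ≤ π := hargs ▸ Complex.arg_le_pi s
      rw [show α / 2 - A / (2 * π) = (π * α - A) / (2 * π) by field_simp,
        le_div_iff₀ (by positivity)]
      rw [div_le_iff₀ hα] at h2
      linarith
    · have habss : (‖s‖ : ℝ) = ‖z‖ ^ (1 / α) := by
        have hlog : Real.log (‖s‖) = Real.log (‖z‖) * (1 / α) := by
          field_simp
          linarith [hre]
        rw [← Real.exp_log (norm_pos_iff.mpr hs0), hlog, ← Real.rpow_def_of_pos habs]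
      rw [← Complex.norm_mul_exp_arg_mul_I s, habss, hargs]
      congr 1
      push_cast
      ring
  · rintro ⟨j, ⟨hj1, hj2⟩, rfl⟩
    set θ : ℝ := (A + 2 * j * π) / α with hθ
    have hθ1 : -π < θ := by
      rw [hθ, lt_div_iff₀ hα]
      rw [show -(α / 2) - A / (2 * π) = (-(π * α) - A) / (2 * π) by field_simp,
        div_lt_iff₀ (by positivity)] at hj1
      linarith
    have hθ2 : θ ≤ π := by
      rw [hθ, div_le_iff₀ hα]
      rw [show α / 2 - A / (2 * π) = (π * α - A) / (2 * π) by field_simp,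
        le_div_iff₀ (by positivity)] at hj2
      linarith
    set r : ℝ := ‖z‖ ^ (1 / α) with hr
    have hrpos : 0 < r := Real.rpow_pos_of_pos habs _
    have hsexp : (r : ℂ) * Complex.exp (Complex.I * θ)
        = Complex.exp ((Real.log r : ℂ) + θ * Complex.I) := by
      rw [Complex.exp_add, ← Complex.ofReal_exp, Real.exp_log hrpos]
      ring_nf
    have hcast : Complex.I * (((A : ℂ) + 2 * (j : ℂ) * (π : ℂ)) / (α : ℂ))
        = Complex.I * (θ : ℂ) := by
      rw [hθ]; push_cast; ring
    rw [hcast, hsexp, Complex.cpow_def_of_ne_zero (Complex.exp_ne_zero _),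
      Complex.log_exp (by simpa using hθ1) (by simpa using hθ2)]
    have hlogr : (Real.log r : ℝ) = Real.log (‖z‖) / α := by
      rw [hr, Real.log_rpow habs]; ring
    have : ((Real.log r : ℂ) + θ * Complex.I) * α
        = Complex.log z + j * (2 * π * Complex.I) := by
      rw [Complex.log]
      push_cast [hlogr, hθ]
      have hαC : (α : ℂ) ≠ 0 := by exact_mod_cast hαne
      field_simp
      ring
    rw [this, Complex.exp_add, Complex.exp_int_mul_two_pi_mul_I, mul_one, Complex.exp_log hz]
end
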